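/- Consider the 6-dimensional complex Lie algebra gl(2,ℂ) ⊕ t₂, where t₂ is spanned by central elements I₁, I₂, and gl(2,ℂ) has basis H₁, H₂, F₁₂, F₂₁ with [H_i, F_{12}] = (δ_{i1} − δ_{i2}) F_{12}, [H_i, F_{21}] = (δ_{i2} − δ_{i1}) F_{21}, [F_{12}, F_{21}] = H₁ − H₂, [H₁,H₂]=0. Define X_i := (H_i + i·I_i)/√2, x^i := (H_i − i·I_i)/√2. Then s₊ := span{X₁, X₂, F₁₂} and s₋ := span{x¹, x², F₂₁} are Lie subalgebras, they are solvable, and gl(2,ℂ) ⊕ t₂ = s₊ ⊕ s₋ as vector spaces. -/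

import Mathlib

/-!
Both subspaces have the shape `span {a, b, f}` with `⁅a, b⁆ = 0` and `f` an eigenvector of
`ad a` and `ad b` (`a, b = X₁, X₂` or `x¹, x²`, `f = F₁₂` or `F₂₁`). Every bracket in such a span
lies on the line through `f`, so the span is a subalgebra whose derived algebra is abelian,
hence solvable. Since `H_i` and `I_i` are combinations of `X_i` and `x^i`, the two subspaces
together span the 6-dimensional algebra, and as each has dimension at most 3 the sum is direct.
-/

open Matrix

attribute [local instance 100] LieRing.ofAssociativeRing

/-- `gl(2,ℂ) ⊕ t₂`, realized as the associative algebra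
`Matrix (Fin 2) (Fin 2) ℂ × (Fin 2 → ℂ)` with the commutator Lie bracket; the second
(commutative) factor is central, spanned by `I₁, I₂`. -/
abbrev gl2t2 : Type := Matrix (Fin 2) (Fin 2) ℂ × (Fin 2 → ℂ)

/-- The Cartan generators `H_i = E_ii`. -/
noncomputable def Hgl (i : Fin 2) : gl2t2 := (single i i 1, 0)

/-- The central generators `I_i`. -/
def Igl (i : Fin 2) : gl2t2 := (0, Pi.single i 1)

/-- The root generators `F_{ij} = E_{ij}` (`i ≠ j`). -/
noncomputable def Fgl (i j : Fin 2) : gl2t2 := (single i j 1, 0)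

/-- `X_i := (H_i + i·I_i)/√2`. -/
noncomputable def Xgl (i : Fin 2) : gl2t2 :=
  ((Real.sqrt 2 : ℂ))⁻¹ • (Hgl i + Complex.I • Igl i)

/-- `x^i := (H_i − i·I_i)/√2`. -/
noncomputable def xgl (i : Fin 2) : gl2t2 :=
  ((Real.sqrt 2 : ℂ))⁻¹ • (Hgl i - Complex.I • Igl i)

section LieBracketOfSpan

variable {R L : Type*} [CommRing R] [LieRing L] [LieAlgebra R L]

theorem lie_mem_of_mem_span {s : Set L} {K : Submodule R L}
    (h : ∀ a ∈ s, ∀ b ∈ s, ⁅a, b⁆ ∈ K) {x y : L}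
    (hx : x ∈ Submodule.span R s) (hy : y ∈ Submodule.span R s) : ⁅x, y⁆ ∈ K := by
  induction hx, hy using Submodule.span_induction₂ with
  | mem_mem a b ha hb => exact h a ha b hb
  | zero_left => simp
  | zero_right => simp
  | add_left _ _ _ _ _ _ hx hy => simpa only [add_lie] using add_mem hx hy
  | add_right _ _ _ _ _ _ hx hy => simpa only [lie_add] using add_mem hx hy
  | smul_left r _ _ _ _ h => simpa only [smul_lie] using K.smul_mem r h
  | smul_right r _ _ _ _ h => simpa only [lie_smul] using K.smul_mem r h

theorem lie_mem_span_singleton_of_mem_span_triple {a b f : L} (hab : ⁅a, b⁆ = 0)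
    (haf : ⁅a, f⁆ ∈ R ∙ f) (hbf : ⁅b, f⁆ ∈ R ∙ f) {x y : L}
    (hx : x ∈ Submodule.span R {a, b, f}) (hy : y ∈ Submodule.span R {a, b, f}) :
    ⁅x, y⁆ ∈ R ∙ f := by
  have hba : ⁅b, a⁆ = 0 := by rw [← lie_skew, hab, neg_zero]
  have hfa : ⁅f, a⁆ ∈ R ∙ f := by rw [← lie_skew]; exact neg_mem haf
  have hfb : ⁅f, b⁆ ∈ R ∙ f := by rw [← lie_skew]; exact neg_mem hbf
  refine lie_mem_of_mem_span ?_ hx hy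
  rintro u (rfl | rfl | rfl) v (rfl | rfl | rfl) <;>
    simp only [lie_self, hab, hba, haf, hbf, hfa, hfb, zero_mem]

end LieBracketOfSpan

namespace LieAlgebra

variable (R : Type*) {L : Type*} [CommRing R] [LieRing L] [LieAlgebra R L]

theorem isSolvable_of_isLieAbelian_derivedSeries_one
    [IsLieAbelian (derivedSeries R L 1)] : IsSolvable L := by
  refine IsSolvable.mk (R := R) (k := 1 + 1) ?_
  rw [derivedSeries_def, derivedSeriesOfIdeal_add, ← derivedSeries_def,
    ← abelian_iff_derived_one_eq_bot]
  infer_instance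

theorem isSolvable_of_forall_lie_mem_span_singleton (f : L)
    (h : ∀ x y : L, ⁅x, y⁆ ∈ R ∙ f) : IsSolvable L := by
  have hD : (derivedSeries R L 1 : Submodule R L) ≤ R ∙ f := by
    rw [coe_derivedSeries_one_eq, Submodule.span_le]
    rintro _ ⟨x, y, rfl⟩
    exact h x y
  have : IsLieAbelian (derivedSeries R L 1) := by
    refine ⟨fun u v => Subtype.ext ?_⟩
    obtain ⟨c, hc⟩ := Submodule.mem_span_singleton.mp (hD u.2)
    obtain ⟨d, hd⟩ := Submodule.mem_span_singleton.mp (hD v.2)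
    simp [← hc, ← hd]
  exact isSolvable_of_isLieAbelian_derivedSeries_one R

end LieAlgebra

section SpanOfTriple

variable {R L : Type*} [CommRing R] [LieRing L] [LieAlgebra R L] {a b f : L}

theorem lie_mem_span_triple (hab : ⁅a, b⁆ = 0) (haf : ⁅a, f⁆ ∈ R ∙ f) (hbf : ⁅b, f⁆ ∈ R ∙ f)
    {x y : L} (hx : x ∈ Submodule.span R {a, b, f}) (hy : y ∈ Submodule.span R {a, b, f}) :
    ⁅x, y⁆ ∈ Submodule.span R {a, b, f} :=
  Submodule.span_mono (by simp) (lie_mem_span_singleton_of_mem_span_triple hab haf hbf hx hy)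

theorem LieSubalgebra.isSolvable_of_toSubmodule_eq_span_triple (S : LieSubalgebra R L)
    (hS : S.toSubmodule = Submodule.span R {a, b, f})
    (hab : ⁅a, b⁆ = 0) (haf : ⁅a, f⁆ ∈ R ∙ f) (hbf : ⁅b, f⁆ ∈ R ∙ f) :
    LieAlgebra.IsSolvable S := by
  have hmem (z : L) : z ∈ S ↔ z ∈ Submodule.span R {a, b, f} := SetLike.ext_iff.mp hS z
  have hf : f ∈ S := (hmem f).mpr (Submodule.subset_span (by simp))
  refine LieAlgebra.isSolvable_of_forall_lie_mem_span_singleton R ⟨f, hf⟩ fun x y => ?_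
  have hxy := lie_mem_span_singleton_of_mem_span_triple hab haf hbf
    ((hmem x).mp x.2) ((hmem y).mp y.2)
  obtain ⟨c, hc⟩ := Submodule.mem_span_singleton.mp hxy
  exact Submodule.mem_span_singleton.mpr ⟨c, Subtype.ext hc⟩

end SpanOfTriple

section Dimension

variable {K V : Type*} [DivisionRing K] [AddCommGroup V] [Module K V]

theorem finrank_span_triple_le (a b c : V) :
    Module.finrank K (Submodule.span K {a, b, c}) ≤ 3 := by
  classical
  have h := finrank_span_finset_le_card (R := K) ({a, b, c} : Finset V)
  rw [Set.finrank, Finset.coe_insert, Finset.coe_insert, Finset.coe_singleton] at h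
  exact h.trans Finset.card_le_three

theorem Submodule.inf_eq_bot_of_sup_eq_top_of_finrank_add_le [FiniteDimensional K V]
    {p q : Submodule K V} (hpq : p ⊔ q = ⊤)
    (hdim : Module.finrank K p + Module.finrank K q ≤ Module.finrank K V) : p ⊓ q = ⊥ := by
  have h := Submodule.finrank_sup_add_finrank_inf_eq p q
  rw [hpq, finrank_top] at h
  exact Submodule.finrank_eq_zero.mp (by omega)

end Dimension

theorem lie_Xgl_zero_Xgl_one : ⁅Xgl 0, Xgl 1⁆ = 0 := by
  simp [Ring.lie_def, Xgl, Hgl, Igl, mul_comm]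

theorem lie_xgl_zero_xgl_one : ⁅xgl 0, xgl 1⁆ = 0 := by
  simp [Ring.lie_def, xgl, Hgl, Igl, mul_comm]

theorem lie_Xgl_zero_Fgl : ⁅Xgl 0, Fgl 0 1⁆ = (Real.sqrt 2 : ℂ)⁻¹ • Fgl 0 1 := by
  simp [Ring.lie_def, Xgl, Hgl, Igl, Fgl]

theorem lie_Xgl_one_Fgl : ⁅Xgl 1, Fgl 0 1⁆ = -(Real.sqrt 2 : ℂ)⁻¹ • Fgl 0 1 := by
  simp [Ring.lie_def, Xgl, Hgl, Igl, Fgl]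

theorem lie_xgl_zero_Fgl : ⁅xgl 0, Fgl 1 0⁆ = -(Real.sqrt 2 : ℂ)⁻¹ • Fgl 1 0 := by
  simp [Ring.lie_def, xgl, Hgl, Igl, Fgl]

theorem lie_xgl_one_Fgl : ⁅xgl 1, Fgl 1 0⁆ = (Real.sqrt 2 : ℂ)⁻¹ • Fgl 1 0 := by
  simp [Ring.lie_def, xgl, Hgl, Igl, Fgl]

theorem Xgl_add_xgl (i : Fin 2) : Xgl i + xgl i = (2 * (Real.sqrt 2 : ℂ)⁻¹) • Hgl i := by
  simp only [Xgl, xgl]; module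

theorem Xgl_sub_xgl (i : Fin 2) :
    Xgl i - xgl i = (2 * (Real.sqrt 2 : ℂ)⁻¹ * Complex.I) • Igl i := by
  simp only [Xgl, xgl]; module

theorem Hgl_mem_span (i : Fin 2) : Hgl i ∈ Submodule.span ℂ {Xgl i, xgl i} := by
  have h : (2 * (Real.sqrt 2 : ℂ)⁻¹) ≠ 0 := by simp
  rw [← inv_smul_smul₀ h (Hgl i), ← Xgl_add_xgl]
  exact Submodule.smul_mem _ _ (add_mem (Submodule.subset_span (by simp))
    (Submodule.subset_span (by simp)))

theorem Igl_mem_span (i : Fin 2) : Igl i ∈ Submodule.span ℂ {Xgl i, xgl i} := by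
  have h : (2 * (Real.sqrt 2 : ℂ)⁻¹ * Complex.I) ≠ 0 := by simp
  rw [← inv_smul_smul₀ h (Igl i), ← Xgl_sub_xgl]
  exact Submodule.smul_mem _ _ (sub_mem (Submodule.subset_span (by simp))
    (Submodule.subset_span (by simp)))

theorem eq_Hgl_Fgl_Igl_combination (z : gl2t2) :
    z = z.1 0 0 • Hgl 0 + z.1 1 1 • Hgl 1 + z.1 0 1 • Fgl 0 1 + z.1 1 0 • Fgl 1 0
      + z.2 0 • Igl 0 + z.2 1 • Igl 1 := by
  refine Prod.ext ?_ ?_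
  · ext i j
    fin_cases i <;> fin_cases j <;> simp [Hgl, Fgl, Igl]
  · ext i
    fin_cases i <;> simp [Hgl, Fgl, Igl]

theorem finrank_gl2t2 : Module.finrank ℂ gl2t2 = 6 := by
  simp [Module.finrank_matrix]

theorem span_Hgl_Fgl_Igl_eq_top :
    Submodule.span ℂ {Hgl 0, Hgl 1, Fgl 0 1, Fgl 1 0, Igl 0, Igl 1} = ⊤ := by
  refine eq_top_iff.mpr fun z _ => ?_
  rw [eq_Hgl_Fgl_Igl_combination z]
  refine add_mem (add_mem (add_mem (add_mem (add_mem ?_ ?_) ?_) ?_) ?_) ?_ <;>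
    exact Submodule.smul_mem _ _ (Submodule.subset_span (by simp))

theorem span_Xgl_sup_span_xgl :
    Submodule.span ℂ {Xgl 0, Xgl 1, Fgl 0 1} ⊔ Submodule.span ℂ {xgl 0, xgl 1, Fgl 1 0} = ⊤ := by
  set K := Submodule.span ℂ {Xgl 0, Xgl 1, Fgl 0 1} ⊔ Submodule.span ℂ {xgl 0, xgl 1, Fgl 1 0}
  have hXx (i : Fin 2) : Submodule.span ℂ {Xgl i, xgl i} ≤ K := by
    rw [Submodule.span_insert]
    refine sup_le_sup ?_ ?_ <;> fin_cases i <;> exact Submodule.span_mono (by simp)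
  rw [eq_top_iff, ← span_Hgl_Fgl_Igl_eq_top, Submodule.span_le]
  simp only [Set.insert_subset_iff, Set.singleton_subset_iff, SetLike.mem_coe]
  exact ⟨hXx 0 (Hgl_mem_span 0), hXx 1 (Hgl_mem_span 1),
    Submodule.mem_sup_left (Submodule.subset_span (by simp)),
    Submodule.mem_sup_right (Submodule.subset_span (by simp)),
    hXx 0 (Igl_mem_span 0), hXx 1 (Igl_mem_span 1)⟩

/-- `sp = span{X₁, X₂, F₁₂}` and `sm = span{x¹, x², F₂₁}` are Lie
subalgebras of `gl(2,ℂ) ⊕ t₂`, they are solvable, and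
`gl(2,ℂ) ⊕ t₂ = sp ⊕ sm` as vector spaces. -/
theorem gl2_double_decomposition
    (sp sm : Submodule ℂ gl2t2)
    (hsp : sp = Submodule.span ℂ {Xgl 0, Xgl 1, Fgl 0 1})
    (hsm : sm = Submodule.span ℂ {xgl 0, xgl 1, Fgl 1 0}) :
    (∀ x ∈ sp, ∀ y ∈ sp, ⁅x, y⁆ ∈ sp) ∧
    (∀ x ∈ sm, ∀ y ∈ sm, ⁅x, y⁆ ∈ sm) ∧
    (∀ S : LieSubalgebra ℂ gl2t2, S.toSubmodule = sp → LieAlgebra.IsSolvable S) ∧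
    (∀ S : LieSubalgebra ℂ gl2t2, S.toSubmodule = sm → LieAlgebra.IsSolvable S) ∧
    sp ⊓ sm = ⊥ ∧ sp ⊔ sm = ⊤ := by
  subst hsp hsm
  have hXF0 := Submodule.mem_span_singleton.mpr ⟨_, lie_Xgl_zero_Fgl.symm⟩
  have hXF1 := Submodule.mem_span_singleton.mpr ⟨_, lie_Xgl_one_Fgl.symm⟩
  have hxF0 := Submodule.mem_span_singleton.mpr ⟨_, lie_xgl_zero_Fgl.symm⟩
  have hxF1 := Submodule.mem_span_singleton.mpr ⟨_, lie_xgl_one_Fgl.symm⟩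
  have hdim := add_le_add (finrank_span_triple_le (K := ℂ) (Xgl 0) (Xgl 1) (Fgl 0 1))
    (finrank_span_triple_le (K := ℂ) (xgl 0) (xgl 1) (Fgl 1 0))
  refine ⟨fun x hx y hy => lie_mem_span_triple lie_Xgl_zero_Xgl_one hXF0 hXF1 hx hy,
    fun x hx y hy => lie_mem_span_triple lie_xgl_zero_xgl_one hxF0 hxF1 hx hy,
    fun S hS => S.isSolvable_of_toSubmodule_eq_span_triple hS lie_Xgl_zero_Xgl_one hXF0 hXF1,
    fun S hS => S.isSolvable_of_toSubmodule_eq_span_triple hS lie_xgl_zero_xgl_one hxF0 hxF1,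
    Submodule.inf_eq_bot_of_sup_eq_top_of_finrank_add_le span_Xgl_sup_span_xgl
      (finrank_gl2t2 ▸ hdim), span_Xgl_sup_span_xgl⟩
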